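/- Monotonicity of validity over sets of reductions: an argument ⟨D, J⟩ is valid on a base B (respectively logically valid) if and only if for every extension H ⊇ J of the reduction set, ⟨D, H⟩ is valid on B (respectively logically valid). -/

import Mathlib

/-- Propositional atoms: `⊥` and countably many atoms `p n`. -/
inductive PAtom : Type
  | bot
  | p (n : ℕ)
deriving DecidableEq

/-- Formulas of the propositional language. -/
inductive Formula : Type
  | atom (a : PAtom)
  | and (A B : Formula)
  | or (A B : Formula)
  | imp (A B : Formula)
deriving DecidableEq

/-- Atomic rules (level ≤ 1): a list of atomic premises and an atomic conclusion.
An axiom (level-0 rule) is `⟨[], a⟩`. -/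
structure ARule where
  prems : List PAtom
  concl : PAtom
deriving DecidableEq

/-- The atomic explosion rules: from `⊥` infer any atom. -/
def AE : Set ARule := { r | ∃ a, r = ⟨[PAtom.bot], a⟩ }

/-- An atomic base is a set of atomic rules containing atomic explosion. -/
def IsBase (B : Set ARule) : Prop := AE ⊆ B

/-- Argument structures: natural-deduction-style trees with arbitrary inference
steps. `hyp A` is an assumption; `node c prems` is an inference to conclusion `c`
from the listed premise subtrees, where each premise comes with a list of
assumption-formulas it discharges in that subtree. An axiom is `node c []`. -/
inductive Arg : Type
  | hyp (A : Formula)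
  | node (concl : Formula) (prems : List (List Formula × Arg))

/-- Conclusion of an argument structure. -/
def Arg.concl : Arg → Formula
  | .hyp A => A
  | .node c _ => c

mutual
/-- The (open, i.e. undischarged) assumption-formulas of an argument structure. -/
def Arg.assumptions : Arg → Finset Formula
  | .hyp A => {A}
  | .node _ prems => assumptionsList prems

def assumptionsList : List (List Formula × Arg) → Finset Formula
  | [] => ∅
  | pr :: rest => (Arg.assumptions pr.2 \ pr.1.toFinset) ∪ assumptionsList rest
end

mutual
/-- Substitution of argument structures for the open assumptions of an argument
structure; `bound` records the assumption-formulas discharged above. -/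
def Arg.subst (σ : Formula → Arg) (bound : Finset Formula) : Arg → Arg
  | .hyp A => if A ∈ bound then .hyp A else σ A
  | .node c prems => .node c (substList σ bound prems)

def substList (σ : Formula → Arg) (bound : Finset Formula) :
    List (List Formula × Arg) → List (List Formula × Arg)
  | [] => []
  | pr :: rest => (pr.1, Arg.subst σ (bound ∪ pr.1.toFinset) pr.2) :: substList σ bound rest
end

/-- `AtomDeriv B D` : the argument structure `D` is an atomic derivation of the
base `B` (every node is an application of a rule of `B`). -/
inductive AtomDeriv (B : Set ARule) : Arg → Prop
  | app (r : ARule) (hr : r ∈ B) (subs : List Arg)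
      (hc : subs.map Arg.concl = r.prems.map Formula.atom)
      (hs : ∀ D ∈ subs, AtomDeriv B D) :
      AtomDeriv B (.node (.atom r.concl) (subs.map (fun D => ([], D))))

/-- A reduction is a partial function on argument structures. -/
abbrev Red := Arg → Option Arg

/-- One-step reduction relative to a set of reductions `J`: apply some `φ ∈ J` to
some substructure. -/
inductive Step (J : Set Red) : Arg → Arg → Prop
  | red {φ : Red} {D D' : Arg} : φ ∈ J → φ D = some D' → Step J D D'
  | congr {c : Formula} {pre post : List (List Formula × Arg)} {ds : List Formula}
      {D D' : Arg} : Step J D D' →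
      Step J (.node c (pre ++ (ds, D) :: post)) (.node c (pre ++ (ds, D') :: post))

/-- `D` reduces to `D'` relative to `J` (reflexive-transitive closure). -/
def Reduces (J : Set Red) : Arg → Arg → Prop := Relation.ReflTransGen (Step J)

/-- Validity of closed arguments `⟨D, J⟩` on a base `B`, by recursion on the
conclusion: a closed argument with atomic conclusion must reduce to an atomic
derivation of the base; one with compound conclusion must reduce to a canonical
(introduction-ended) closed structure whose immediate substructures are valid
(for `→`, valid as an open argument: under every extension of the reduction set
and of the base, substitution of valid closed arguments for the discharged
assumption yields a valid closed argument). -/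
def CValid : Formula → Set ARule → Set Red → Arg → Prop
  | .atom a, B, J, D => ∃ D', Reduces J D D' ∧ AtomDeriv B D' ∧ D'.concl = .atom a
  | .and A C, B, J, D => ∃ D1 D2 : Arg,
      Reduces J D (.node (A.and C) [([], D1), ([], D2)]) ∧
      D1.assumptions = ∅ ∧ D2.assumptions = ∅ ∧ D1.concl = A ∧ D2.concl = C ∧
      CValid A B J D1 ∧ CValid C B J D2
  | .or A C, B, J, D =>
      (∃ D1 : Arg, Reduces J D (.node (A.or C) [([], D1)]) ∧
        D1.assumptions = ∅ ∧ D1.concl = A ∧ CValid A B J D1) ∨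
      (∃ D1 : Arg, Reduces J D (.node (A.or C) [([], D1)]) ∧
        D1.assumptions = ∅ ∧ D1.concl = C ∧ CValid C B J D1)
  | .imp A C, B, J, D => ∃ D1 : Arg,
      Reduces J D (.node (A.imp C) [([A], D1)]) ∧
      D1.assumptions ⊆ {A} ∧ D1.concl = C ∧
      ∀ H : Set Red, J ⊆ H → ∀ X : Set ARule, B ⊆ X → ∀ E : Arg,
        E.assumptions = ∅ → E.concl = A → CValid A X H E →
        CValid C X H (Arg.subst (fun _ => E) ∅ D1)

/-- Validity of an argument `⟨D, J⟩` on a base `B` (Prawitz, monotonic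
introduction-based form): closed arguments as in `CValid`; an open argument is
valid iff for every extension `H ⊇ J` of the reduction set, every extension
`X ⊇ B` of the base, and every assignment of closed arguments valid on `X`
(w.r.t. `H`) to its open assumptions, the resulting closed instance is valid
on `X` w.r.t. `H`. -/
def Valid (B : Set ARule) (D : Arg) (J : Set Red) : Prop :=
  if D.assumptions = ∅ then CValid D.concl B J D
  else ∀ (σ : Formula → Arg) (H : Set Red) (X : Set ARule), J ⊆ H → B ⊆ X →
    (∀ A ∈ D.assumptions, (σ A).assumptions = ∅ ∧ (σ A).concl = A ∧ CValid A X H (σ A)) →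
    CValid D.concl X H (Arg.subst σ ∅ D)

/-- Logical validity: validity on every atomic base. -/
def LValid (D : Arg) (J : Set Red) : Prop :=
  ∀ B : Set ARule, IsBase B → Valid B D J

/-- miP-tV consequence over a base: `Γ ⊨_B A` iff there is an argument `⟨D, J⟩`
valid on `B` with `D` an argument structure from `Γ` to `A`. -/
def EntailsOn (B : Set ARule) (Γ : Finset Formula) (A : Formula) : Prop :=
  ∃ (D : Arg) (J : Set Red), D.assumptions = Γ ∧ D.concl = A ∧ Valid B D J

/-- miP-tV logical consequence: `Γ ⊨ A` iff there is a logically valid argument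
`⟨D, J⟩` with `D` from `Γ` to `A`. -/
def Entails (Γ : Finset Formula) (A : Formula) : Prop :=
  ∃ (D : Arg) (J : Set Red), D.assumptions = Γ ∧ D.concl = A ∧ LValid D J

/-!
Reductions enter validity only positively: a reduction sequence via `J` is one via any
`H ⊇ J`, and the clauses for `→` and for open arguments already quantify over all
extensions of the reduction set, which are in particular extensions of `J`.
-/

theorem Step.mono {J H : Set Red} (hJH : J ⊆ H) {D D' : Arg} (hs : Step J D D') :
    Step H D D' := by
  induction hs with
  | red hφ hD => exact .red (hJH hφ) hD
  | congr _ ih => exact .congr ih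

theorem Reduces.mono {J H : Set Red} (hJH : J ⊆ H) {D D' : Arg} (hr : Reduces J D D') :
    Reduces H D D' :=
  Relation.ReflTransGen.mono (fun _ _ => Step.mono hJH) _ _ hr

theorem CValid.mono {A : Formula} {B : Set ARule} {J H : Set Red} {D : Arg} (hJH : J ⊆ H)
    (hv : CValid A B J D) : CValid A B H D := by
  induction A generalizing D with
  | atom a =>
    obtain ⟨D', hr, hderiv, hconcl⟩ := hv
    exact ⟨D', hr.mono hJH, hderiv, hconcl⟩
  | and A C ihA ihC =>
    obtain ⟨D1, D2, hr, h1, h2, hc1, hc2, hv1, hv2⟩ := hv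
    exact ⟨D1, D2, hr.mono hJH, h1, h2, hc1, hc2, ihA hv1, ihC hv2⟩
  | or A C ihA ihC =>
    rcases hv with ⟨D1, hr, h1, hc1, hv1⟩ | ⟨D1, hr, h1, hc1, hv1⟩
    · exact .inl ⟨D1, hr.mono hJH, h1, hc1, ihA hv1⟩
    · exact .inr ⟨D1, hr.mono hJH, h1, hc1, ihC hv1⟩
  | imp A C =>
    obtain ⟨D1, hr, h1, hc1, hsubst⟩ := hv
    exact ⟨D1, hr.mono hJH, h1, hc1, fun H' hHH' => hsubst H' (hJH.trans hHH')⟩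

theorem Valid.mono {B : Set ARule} {D : Arg} {J H : Set Red} (hJH : J ⊆ H)
    (hv : Valid B D J) : Valid B D H := by
  unfold Valid at hv ⊢
  split_ifs at hv ⊢
  · exact hv.mono hJH
  · exact fun σ H' X hHH' => hv σ H' X (hJH.trans hHH')

theorem LValid.mono {D : Arg} {J H : Set Red} (hJH : J ⊆ H) (hv : LValid D J) :
    LValid D H :=
  fun B hB => (hv B hB).mono hJH

/-- monotonicity of miP-tV validity over sets of reductions:
`⟨D, J⟩` is valid on `B` (resp. logically valid) iff for every extension
`H ⊇ J`, `⟨D, H⟩` is valid on `B` (resp. logically valid). -/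
theorem valid_monotone_reductions (D : Arg) (J : Set Red) :
    (∀ B : Set ARule, IsBase B → (Valid B D J ↔ ∀ H : Set Red, J ⊆ H → Valid B D H)) ∧
    (LValid D J ↔ ∀ H : Set Red, J ⊆ H → LValid D H) :=
  ⟨fun _ _ => ⟨fun hv _ hJH => hv.mono hJH, fun hall => hall J subset_rfl⟩,
    ⟨fun hv _ hJH => hv.mono hJH, fun hall => hall J subset_rfl⟩⟩
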